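/- Let H be the conjunctive hierarchical game H_∀(P, k) with m parts satisfying k_1 ≤ n_1 and k_i < k_{i−1} + n_i for 2 ≤ i ≤ m, and no dummies (k_{m−1} < k_m). Then every shift-maximal losing coalition of H has model of the form {1^{a_1},...,i^{a_i},(i+1)^{n_{i+1}},...,m^{n_m}} for some i ∈ [m], where a_1 + ... + a_i = k_i − 1, a_i < n_i, and whenever a_t > 0 for t ≤ i, a_s = n_s for all s < t. -/

import Mathlib

/-!
Let `i` be the first level at which the losing coalition `Y` misses its quota. Adding any
player must repair level `i`, so every player outside `Y` belongs to the first `i` parts, and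
`Y` is exactly one player short there: it has `kᵢ - 1` players in those parts (the conditions
on `k` make `kᵢ ≤ n₁ + ⋯ + nᵢ`, so some player of these parts is missing from `Y`). Part `i`
cannot be full, since with level `i - 1` met, a full part `i` would already give
`kᵢ₋₁ + nᵢ > kᵢ` players. Finally, exchanging a player of part `t ≤ i` for an absent player of
an earlier part keeps the count at level `i` unchanged, so the exchange cannot make `Y`
winning: hence no such absent player exists.
-/

namespace HierarchicalGame

open Finset

variable {α : Type*} {m : ℕ}

theorem cls_eq_of_mem {P : Fin m → Finset α}
    (hdisj : ∀ i j : Fin m, i ≠ j → Disjoint (P i) (P j)) {cls : α → Fin m}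
    (hcls : ∀ p, p ∈ P (cls p)) {p : α} {j : Fin m} (hp : p ∈ P j) :
    cls p = j :=
  by_contra fun h => disjoint_left.1 (hdisj _ _ h) (hcls p) hp

variable [DecidableEq α]

theorem card_insert_inter_le (p : α) (X S : Finset α) :
    (insert p X ∩ S).card ≤ (X ∩ S).card + 1 :=
  calc (insert p X ∩ S).card ≤ (insert p (X ∩ S)).card := by
        gcongr
        intro x
        simp only [mem_inter, mem_insert]
        tauto
    _ ≤ (X ∩ S).card + 1 := card_insert_le _ _

theorem card_insert_erase_inter {p q : α} {X S : Finset α} (hpX : p ∈ X) (hpS : p ∈ S)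
    (hqX : q ∉ X) (hqS : q ∈ S) : (insert q (X.erase p) ∩ S).card = (X ∩ S).card := by
  have hq : q ∉ (X ∩ S).erase p := fun h => hqX (mem_inter.1 (mem_of_mem_erase h)).1
  rw [insert_inter_of_mem hqS, erase_inter, card_insert_of_notMem hq,
    card_erase_add_one (mem_inter.2 ⟨hpX, hpS⟩)]

theorem mem_of_card_inter_lt_card_insert_inter {p : α} {Y S : Finset α}
    (hlt : (Y ∩ S).card < (insert p Y ∩ S).card) : p ∈ S := by
  by_contra hpS
  rw [insert_inter_of_notMem hpS] at hlt
  exact lt_irrefl _ hlt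

theorem card_inter_eq_sub_one_of_forall_insert {Y S : Finset α} {k : ℕ}
    (hlt : (Y ∩ S).card < k) (hext : ∀ p ∉ Y, k ≤ (insert p Y ∩ S).card)
    (hkS : k ≤ S.card) :
    (Y ∩ S).card = k - 1 := by
  obtain ⟨p, -, hpY⟩ := not_subset.1 fun h : S ⊆ Y => (inter_eq_right.2 h ▸ hlt).not_ge hkS
  have := hext p hpY
  have := card_insert_inter_le p Y S
  omega

def prefixUnion (P : Fin m → Finset α) (i : Fin m) : Finset α :=
  (univ.filter (· ≤ i)).biUnion P

variable {P : Fin m → Finset α}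

theorem mem_prefixUnion {p : α} {i : Fin m} :
    p ∈ prefixUnion P i ↔ ∃ j ≤ i, p ∈ P j := by
  simp [prefixUnion]

theorem subset_prefixUnion {i j : Fin m} (hji : j ≤ i) : P j ⊆ prefixUnion P i :=
  fun _ hp => mem_prefixUnion.2 ⟨j, hji, hp⟩

theorem prefixUnion_of_val_eq_zero {i : Fin m} (hi : (i : ℕ) = 0) : prefixUnion P i = P i := by
  ext p
  rw [mem_prefixUnion]
  refine ⟨fun ⟨j, hji, hp⟩ => ?_, fun hp => ⟨i, le_rfl, hp⟩⟩
  rwa [show j = i from Fin.ext (by rw [Fin.le_def] at hji; omega)] at hp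

theorem prefixUnion_of_val_eq_succ {i j : Fin m} (hji : (j : ℕ) + 1 = i) :
    prefixUnion P i = prefixUnion P j ∪ P i := by
  ext p
  simp only [mem_union, mem_prefixUnion, Fin.le_def]
  constructor
  · rintro ⟨l, hl, hp⟩
    rcases Nat.lt_or_eq_of_le hl with hlt | heq
    · exact Or.inl ⟨l, by omega, hp⟩
    · exact Or.inr (Fin.ext heq ▸ hp)
  · rintro (⟨l, hl, hp⟩ | hp)
    · exact ⟨l, by omega, hp⟩
    · exact ⟨i, le_rfl, hp⟩

theorem mem_prefixUnion_iff_cls_le (hdisj : ∀ i j : Fin m, i ≠ j → Disjoint (P i) (P j))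
    {cls : α → Fin m} (hcls : ∀ p, p ∈ P (cls p)) {p : α} {i : Fin m} :
    p ∈ prefixUnion P i ↔ cls p ≤ i := by
  rw [mem_prefixUnion]
  exact ⟨fun ⟨j, hji, hp⟩ => cls_eq_of_mem hdisj hcls hp ▸ hji,
    fun h => ⟨cls p, h, hcls p⟩⟩

theorem disjoint_prefixUnion (hdisj : ∀ i j : Fin m, i ≠ j → Disjoint (P i) (P j))
    {i j : Fin m} (hji : j < i) : Disjoint (prefixUnion P j) (P i) := by
  rw [prefixUnion, disjoint_biUnion_left]
  intro l hl
  exact hdisj l i (((mem_filter.1 hl).2.trans_lt hji).ne)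

theorem card_inter_prefixUnion_of_val_eq_succ
    (hdisj : ∀ i j : Fin m, i ≠ j → Disjoint (P i) (P j)) (X : Finset α) {i j : Fin m}
    (hji : (j : ℕ) + 1 = i) :
    (X ∩ prefixUnion P i).card = (X ∩ prefixUnion P j).card + (X ∩ P i).card := by
  rw [prefixUnion_of_val_eq_succ hji, inter_union_distrib_left, card_union_of_disjoint]
  exact (disjoint_prefixUnion hdisj (Fin.lt_def.2 (by omega))).mono
    inter_subset_right inter_subset_right

theorem card_inter_prefixUnion (hdisj : ∀ i j : Fin m, i ≠ j → Disjoint (P i) (P j))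
    (X : Finset α) (i : Fin m) :
    (X ∩ prefixUnion P i).card = ∑ j ∈ univ.filter (· ≤ i), (X ∩ P j).card := by
  rw [prefixUnion, inter_biUnion, card_biUnion]
  intro j _ l _ hjl
  exact (hdisj j l hjl).mono inter_subset_right inter_subset_right

variable {kk : Fin m → ℕ}

theorem quota_le_card_inter_prefixUnion (hdisj : ∀ i j : Fin m, i ≠ j → Disjoint (P i) (P j))
    (hk0 : ∀ i : Fin m, (i : ℕ) = 0 → kk i ≤ (P i).card)
    (hksucc : ∀ j i : Fin m, (j : ℕ) + 1 = i → kk i < kk j + (P i).card)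
    {X : Finset α} {i : Fin m} (hPX : P i ⊆ X)
    (hprev : ∀ j : Fin m, (j : ℕ) + 1 = i → kk j ≤ (X ∩ prefixUnion P j).card) :
    kk i ≤ (X ∩ prefixUnion P i).card := by
  obtain hi | hi := Nat.eq_zero_or_pos (i : ℕ)
  · rw [prefixUnion_of_val_eq_zero hi, inter_eq_right.2 hPX]
    exact hk0 i hi
  · set j : Fin m := ⟨i - 1, by omega⟩
    have hji : (j : ℕ) + 1 = i := by simp only [j]; omega
    rw [card_inter_prefixUnion_of_val_eq_succ hdisj X hji, inter_eq_right.2 hPX]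
    linarith [hksucc j i hji, hprev j hji]

theorem quota_le_card_prefixUnion (hdisj : ∀ i j : Fin m, i ≠ j → Disjoint (P i) (P j))
    (hk0 : ∀ i : Fin m, (i : ℕ) = 0 → kk i ≤ (P i).card)
    (hksucc : ∀ j i : Fin m, (j : ℕ) + 1 = i → kk i < kk j + (P i).card) (i : Fin m) :
    kk i ≤ (prefixUnion P i).card := by
  have hU : ∀ j, univ.biUnion P ∩ prefixUnion P j = prefixUnion P j := fun j =>
    inter_eq_right.2 (biUnion_subset_biUnion_of_subset_left _ (subset_univ _))
  obtain ⟨n, hn⟩ := i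
  rw [← hU]
  induction n with
  | zero =>
    refine quota_le_card_inter_prefixUnion hdisj hk0 hksucc
      (subset_biUnion_of_mem P (mem_univ _)) fun j hj => ?_
    simp at hj
  | succ n ih =>
    refine quota_le_card_inter_prefixUnion hdisj hk0 hksucc
      (subset_biUnion_of_mem P (mem_univ _)) fun j hj => ?_
    have hjn : (j : ℕ) = n := by simp at hj; omega
    obtain ⟨j, hj'⟩ := j
    subst hjn
    exact ih hj'

end HierarchicalGame

open HierarchicalGame

theorem shift_maximal_losing_model_general {α : Type*} [DecidableEq α]
    (m : ℕ) (hm : 1 ≤ m)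
    (P : Fin m → Finset α)
    (hdisj : ∀ i j : Fin m, i ≠ j → Disjoint (P i) (P j))
    (kk : Fin m → ℕ)
    (hk1 : kk ⟨0, hm⟩ ≤ (P ⟨0, hm⟩).card)
    (hki : ∀ i : Fin m, 1 ≤ (i : ℕ) →
      kk i < kk ⟨(i : ℕ) - 1, Nat.lt_of_le_of_lt (Nat.sub_le _ _) i.isLt⟩ + (P i).card)
    (cls : α → Fin m) (hcls : ∀ p : α, p ∈ P (cls p))
    (win : Finset α → Prop)
    (hwin : ∀ X : Finset α, win X ↔ ∀ i : Fin m,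
      kk i ≤ (X ∩ (Finset.univ.filter (· ≤ i)).biUnion P).card)
    (Y : Finset α)
    -- `Y` is losing
    (hlose : ¬ win Y)
    -- adding any player makes `Y` winning
    (hadd : ∀ p ∉ Y, win (insert p Y))
    -- replacing any player of `Y` by a strictly more desirable one makes it winning
    (hshift : ∀ p ∈ Y, ∀ q, q ∉ Y → cls q < cls p → win (insert q (Y.erase p))) :
    ∃ i : Fin m,
      (∀ j : Fin m, i < j → Y ∩ P j = P j) ∧
      (∑ j ∈ Finset.univ.filter (· ≤ i), (Y ∩ P j).card) = kk i - 1 ∧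
      (Y ∩ P i).card < (P i).card ∧
      (∀ t s : Fin m, s < t → t ≤ i → 0 < (Y ∩ P t).card → Y ∩ P s = P s) := by
  have hk0 : ∀ i : Fin m, (i : ℕ) = 0 → kk i ≤ (P i).card := fun i hi => by
    rwa [show i = ⟨0, hm⟩ from Fin.ext hi]
  have hksucc : ∀ j i : Fin m, (j : ℕ) + 1 = i → kk i < kk j + (P i).card := fun j i hji => by
    simpa [show j = ⟨i - 1, by omega⟩ from Fin.ext (by simp; omega)] using hki i (by omega)
  have hlevel : ∀ X, win X → ∀ i, kk i ≤ (X ∩ prefixUnion P i).card := fun X => (hwin X).1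
  obtain ⟨i, hfail : (Y ∩ prefixUnion P i).card < kk i, hmin⟩ :=
    wellFounded_lt.has_min {i | (Y ∩ prefixUnion P i).card < kk i}
      (not_forall_not.1 fun h => hlose ((hwin Y).2 fun i => not_lt.1 (h i)))
  have hext : ∀ p ∉ Y, kk i ≤ (insert p Y ∩ prefixUnion P i).card :=
    fun p hp => hlevel _ (hadd p hp) i
  refine ⟨i, fun j hij => ?_, ?_, ?_, ?_⟩
  · refine Finset.inter_eq_right.2 fun p hp => by_contra fun hpY => ?_
    have := (mem_prefixUnion_iff_cls_le hdisj hcls).1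
      (mem_of_card_inter_lt_card_insert_inter (hfail.trans_le (hext p hpY)))
    exact (cls_eq_of_mem hdisj hcls hp ▸ this).not_gt hij
  · rw [← card_inter_prefixUnion hdisj]
    exact card_inter_eq_sub_one_of_forall_insert hfail hext
      (quota_le_card_prefixUnion hdisj hk0 hksucc i)
  · refine Finset.card_lt_card ⟨Finset.inter_subset_right, fun hPY => hfail.not_ge ?_⟩
    exact quota_le_card_inter_prefixUnion hdisj hk0 hksucc
      (fun p hp => (Finset.mem_inter.1 (hPY hp)).1)
      fun j hji => not_lt.1 fun hj => hmin j hj (Fin.lt_def.2 (by omega))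
  · intro t s hst hti hYt
    obtain ⟨p, hp⟩ := Finset.card_pos.1 hYt
    obtain ⟨hpY, hpt⟩ := Finset.mem_inter.1 hp
    refine Finset.inter_eq_right.2 fun q hq => by_contra fun hqY => ?_
    have hqp : cls q < cls p := by
      rwa [cls_eq_of_mem hdisj hcls hpt, cls_eq_of_mem hdisj hcls hq]
    have hshifted := hlevel _ (hshift p hpY q hqY hqp) i
    rw [card_insert_erase_inter hpY (subset_prefixUnion hti hpt) hqY
      (subset_prefixUnion (hst.le.trans hti) hq)] at hshifted
    omega

/-- Characterization of shift-maximal losing coalitions of a conjunctive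
hierarchical game `H_∀(P, k)` without dummies: each such coalition contains
all players of the parts after some index `i`, exactly `kᵢ - 1` players from
the first `i` parts, fewer than `nᵢ` players from part `i`, and its nonempty
parts among the first `i` are preceded only by full parts. -/
theorem shift_maximal_losing_model {α : Type*} [Fintype α] [DecidableEq α]
    (m : ℕ) (hm : 1 ≤ m)
    (P : Fin m → Finset α)
    (hdisj : ∀ i j : Fin m, i ≠ j → Disjoint (P i) (P j))
    (hcover : (Finset.univ : Finset (Fin m)).biUnion P = Finset.univ)
    (kk : Fin m → ℕ) (hpos : ∀ i, 0 < kk i)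
    (hmonok : ∀ i j : Fin m, i < j → kk i < kk j)
    (hk1 : kk ⟨0, hm⟩ ≤ (P ⟨0, hm⟩).card)
    (hki : ∀ i : Fin m, 1 ≤ (i : ℕ) →
      kk i < kk ⟨(i : ℕ) - 1, Nat.lt_of_le_of_lt (Nat.sub_le _ _) i.isLt⟩ + (P i).card)
    (cls : α → Fin m) (hcls : ∀ p : α, p ∈ P (cls p))
    (win : Finset α → Prop)
    (hwin : ∀ X : Finset α, win X ↔ ∀ i : Fin m,
      kk i ≤ (X ∩ (Finset.univ.filter (· ≤ i)).biUnion P).card)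
    (Y : Finset α)
    -- `Y` is losing
    (hlose : ¬ win Y)
    -- adding any player makes `Y` winning
    (hadd : ∀ p ∉ Y, win (insert p Y))
    -- replacing any player of `Y` by a strictly more desirable one makes it winning
    (hshift : ∀ p ∈ Y, ∀ q, q ∉ Y → cls q < cls p → win (insert q (Y.erase p))) :
    ∃ i : Fin m,
      (∀ j : Fin m, i < j → Y ∩ P j = P j) ∧
      (∑ j ∈ Finset.univ.filter (· ≤ i), (Y ∩ P j).card) = kk i - 1 ∧
      (Y ∩ P i).card < (P i).card ∧
      (∀ t s : Fin m, s < t → t ≤ i → 0 < (Y ∩ P t).card → Y ∩ P s = P s) :=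
  shift_maximal_losing_model_general m hm P hdisj kk hk1 hki cls hcls win hwin Y hlose hadd hshift
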